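/- arXiv:1009.5740 — 2 statements merged into one kernel-verified Lean document; each statement's English description precedes it below -/
import Mathlib

section
/- For every permutation π ∈ S_n, F(L(P_π), q) = F(Λ_π, q); that is, the generating function of linear extensions of the inversion poset of π by number of inversions equals the rank generating function of the weak order interval [id, π]. -/
open Polynomial

namespace SepPerm

/-- The length (number of inversions) of a permutation of `Fin n`. -/
def invCount {n : ℕ} (π : Equiv.Perm (Fin n)) : ℕ :=
  (Finset.univ.filter fun p : Fin n × Fin n => p.1 < p.2 ∧ π p.2 < π p.1).card

/-- The (right) weak Bruhat order: `u ≤ v` iff `ℓ(u) + ℓ(u⁻¹v) = ℓ(v)`. -/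
def wle {n : ℕ} (u v : Equiv.Perm (Fin n)) : Prop :=
  invCount u + invCount (u⁻¹ * v) = invCount v

open scoped Classical in
/-- `F(Λ_π, q) = ∑_{u ≤ π} q^{ℓ(u)}`, rank generating function of `[id, π]`. -/
noncomputable def FLam {n : ℕ} (π : Equiv.Perm (Fin n)) : Polynomial ℤ :=
  ∑ u ∈ Finset.univ.filter (fun u => wle u π), X ^ invCount u

open scoped Classical in
/-- `F(V_π, q) = ∑_{v ≥ π} q^{ℓ(v) - ℓ(π)}`, rank generating function of `[π, w₀]`. -/
noncomputable def FV {n : ℕ} (π : Equiv.Perm (Fin n)) : Polynomial ℤ :=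
  ∑ v ∈ Finset.univ.filter (fun v => wle π v), X ^ (invCount v - invCount π)

/-- A permutation is separable iff it avoids the patterns 3142 and 2413. -/
def IsSeparable {n : ℕ} (π : Equiv.Perm (Fin n)) : Prop :=
  (¬ ∃ i j k h : Fin n, i < j ∧ j < k ∧ k < h ∧
      π j < π h ∧ π h < π i ∧ π i < π k) ∧
  (¬ ∃ i j k h : Fin n, i < j ∧ j < k ∧ k < h ∧
      π k < π i ∧ π i < π h ∧ π h < π j)

/-- The longest element `w₀ = n, n-1, …, 1`. -/
def w0 (n : ℕ) : Equiv.Perm (Fin n) := Fin.revPerm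

/-- The complement `π^c`, with `π^c(i) = n + 1 - π(i)` (one-indexed). -/
def compl {n : ℕ} (π : Equiv.Perm (Fin n)) : Equiv.Perm (Fin n) := w0 n * π

/-- `[k] = 1 + q + ⋯ + q^{k-1}`. -/
noncomputable def qnum (k : ℕ) : Polynomial ℤ := ∑ i ∈ Finset.range k, X ^ i

/-- `[N]! = [1][2]⋯[N]`. -/
noncomputable def qfact (N : ℕ) : Polynomial ℤ := ∏ k ∈ Finset.range N, qnum (k + 1)

/-- The inversion poset `P_π` on the letters: `x ≤_P y` iff `x ≤ y` and `π⁻¹x ≤ π⁻¹y`. -/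
def invLe {n : ℕ} (π : Equiv.Perm (Fin n)) (x y : Fin n) : Prop :=
  x ≤ y ∧ π⁻¹ x ≤ π⁻¹ y

/-- `σ` is a linear extension of the order `r`: whenever `i <_r j`, `i` precedes `j`
in the one-line notation of `σ` (i.e. the position `σ⁻¹ i` comes before `σ⁻¹ j`). -/
def IsLinExt {N : ℕ} (r : Fin N → Fin N → Prop) (σ : Equiv.Perm (Fin N)) : Prop :=
  ∀ i j, r i j → i ≠ j → σ.symm i < σ.symm j

open scoped Classical in
/-- `F(𝓛(P), q) = ∑_{σ ∈ 𝓛(P)} q^{ℓ(σ)}`, generating function of linear extensions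
by number of inversions. -/
noncomputable def FLin {N : ℕ} (r : Fin N → Fin N → Prop) : Polynomial ℤ :=
  ∑ σ ∈ Finset.univ.filter (fun σ => IsLinExt r σ), X ^ invCount σ

/-!
A linear extension of `P_π` is a permutation that inverts no pair of letters kept in order by `π`,
i.e. whose set of inverted pairs of letters is contained in that of `π`. The weak order is the same
inclusion: `ℓ(u⁻¹v)` counts the pairs of letters that `u` and `v` order differently, which is the
size of the symmetric difference of their sets of inverted letter pairs, so
`ℓ(u) + ℓ(u⁻¹v) = ℓ(v)` exactly when the inverted pairs of `u` are among those of `v`.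
Both generating functions therefore sum over the same permutations.
-/

open Finset Function
open scoped symmDiff

section InversionSet

variable {α β : Type*} [Fintype α] [LinearOrder α] [LinearOrder β]

/-- For a permutation `w`, `invSet ⇑w⁻¹` is the set of pairs of letters `a < b` with `b` written
before `a` in `w`. -/
def invSet (f : α → β) : Finset (α × α) :=
  univ.filter fun p => p.1 < p.2 ∧ f p.2 < f p.1

lemma mem_invSet {f : α → β} {p : α × α} : p ∈ invSet f ↔ p.1 < p.2 ∧ f p.2 < f p.1 := by
  simp [invSet]

lemma card_symmDiff_invSet {f g : α → β} (hf : Injective f) (hg : Injective g) :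
    #(invSet f ∆ invSet g) = #(univ.filter fun p : α × α => f p.1 < f p.2 ∧ g p.2 < g p.1) := by
  set D := univ.filter fun p : α × α => f p.1 < f p.2 ∧ g p.2 < g p.1
  have h_lt : D.filter (fun p => p.1 < p.2) = invSet g \ invSet f := by
    ext ⟨a, b⟩
    simp only [D, mem_filter, mem_univ, true_and, mem_sdiff, mem_invSet]
    grind [hf.eq_iff]
  have h_gt : (D.filter (fun p => ¬ p.1 < p.2)).map (Equiv.prodComm α α).toEmbedding =
      invSet f \ invSet g := by
    ext ⟨a, b⟩
    simp only [D, mem_map_equiv, Equiv.prodComm_symm, Equiv.prodComm_apply, Prod.fst_swap,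
      Prod.snd_swap, mem_filter, mem_univ, true_and, mem_sdiff, mem_invSet]
    grind [hg.eq_iff]
  rw [symmDiff_def, sup_eq_union, card_union_of_disjoint disjoint_sdiff_sdiff, ← h_lt, ← h_gt,
    card_map, add_comm, card_filter_add_card_filter_not]

end InversionSet

lemma card_add_card_symmDiff_eq_iff_subset {α : Type*} [DecidableEq α] {s t : Finset α} :
    #s + #(s ∆ t) = #t ↔ s ⊆ t := by
  have h_symmDiff : #(s ∆ t) = #(s \ t) + #(t \ s) :=
    card_union_of_disjoint disjoint_sdiff_sdiff
  have hs := card_sdiff_add_card_inter s t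
  have ht := card_sdiff_add_card_inter t s
  rw [inter_comm] at ht
  rw [← sdiff_eq_empty_iff_subset, ← card_eq_zero]
  omega

lemma invCount_inv_mul {n : ℕ} (u v : Equiv.Perm (Fin n)) :
    invCount (u⁻¹ * v) = #(invSet ⇑u⁻¹ ∆ invSet ⇑v⁻¹) := by
  rw [symmDiff_comm, card_symmDiff_invSet v⁻¹.injective u⁻¹.injective]
  refine card_equiv (v.prodCongr v) fun p => ?_
  simp only [mem_filter_univ]
  simp

lemma invCount_eq_card_invSet_inv {n : ℕ} (u : Equiv.Perm (Fin n)) :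
    invCount u = #(invSet ⇑u⁻¹) := by
  have h_id : invSet (id : Fin n → Fin n) = ∅ := by
    ext p
    simpa [mem_invSet] using le_of_lt
  have h := invCount_inv_mul 1 u
  rwa [inv_one, one_mul, Equiv.Perm.coe_one, h_id, ← bot_eq_empty, bot_symmDiff] at h

lemma wle_iff_invSet_inv_subset {n : ℕ} (u v : Equiv.Perm (Fin n)) :
    wle u v ↔ invSet ⇑u⁻¹ ⊆ invSet ⇑v⁻¹ := by
  rw [wle, invCount_inv_mul, invCount_eq_card_invSet_inv u, invCount_eq_card_invSet_inv v]
  exact card_add_card_symmDiff_eq_iff_subset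

lemma isLinExt_invLe_iff_wle {n : ℕ} (π σ : Equiv.Perm (Fin n)) :
    IsLinExt (invLe π) σ ↔ wle σ π := by
  rw [wle_iff_invSet_inv_subset]
  constructor
  · rintro h ⟨a, b⟩ hab
    obtain ⟨hab, hσ⟩ := mem_invSet.1 hab
    refine mem_invSet.2 ⟨hab, ?_⟩
    by_contra! hπ
    exact (h a b ⟨hab.le, hπ⟩ hab.ne).not_gt hσ
  · intro h a b ⟨hle, hπ⟩ hne
    by_contra! hσ
    have hσ' : σ.symm b < σ.symm a := hσ.lt_of_ne (σ.symm.injective.ne hne.symm)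
    have h_inv : (a, b) ∈ invSet ⇑σ⁻¹ := mem_invSet.2 ⟨hle.lt_of_ne hne, hσ'⟩
    exact (mem_invSet.1 (h h_inv)).2.not_ge hπ

/-- For every `π ∈ S_n`, the generating function of the linear
extensions of the inversion poset `P_π` by number of inversions equals the rank
generating function of the weak order interval `[id, π]`:
`F(𝓛(P_π), q) = F(Λ_π, q)`. -/
theorem FLin_invLe_eq_FLam (n : ℕ) (π : Equiv.Perm (Fin n)) :
    FLin (invLe π) = FLam π := by
  unfold FLin FLam
  congr 1
  ext σ
  simp [isLinExt_invLe_iff_wle]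

end SepPerm
end

section
/- Let π = a_1a_2⋯a_n ∈ S_n be a separable permutation with a_1 > a_n. Then π = π_A π_B where, for some 1 ≤ m < n, π_A is a permutation of the letters {n−m+1,…,n} and π_B is a permutation of the letters {1,…,n−m}, and F(V_π, q) = F(V_{σ_A}, q) · F(V_{σ_B}, q), where σ_A ∈ S_m is obtained from π_A by subtracting n−m from each letter, σ_B ∈ S_{n−m} is π_B, and V_{σ_A}, V_{σ_B} are intervals in S_m and S_{n−m} respectively. -/
open Polynomial

namespace SepPerm

/-! A 3142-avoiding permutation `π` with `π 0 > π (n - 1)` is a skew sum `σ_A ⊖ σ_B`: cut right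
after the last letter that is at least `π 0`; a larger letter after the cut than before it would
complete a 3142 pattern with `π 0`. The weak order is inclusion of inversion sets, so every
`v ≥ π` still has all the inversions between the two blocks, hence is again a skew sum
`σ'_A ⊖ σ'_B`, and `v ≥ π` exactly when `σ'_A ≥ σ_A` and `σ'_B ≥ σ_B`. As
`ℓ(σ'_A ⊖ σ'_B) = ℓ(σ'_A) + ℓ(σ'_B) + m (n - m)`, the upper interval of `π` is the product of the
upper intervals of the blocks, rank by rank. -/

open Finset Equiv Fin

section WeakOrder

variable {n : ℕ}

lemma invCount_eq_sum (w : Perm (Fin n)) :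
    invCount w = ∑ i, ∑ j, if i < j ∧ w j < w i then 1 else 0 := by
  rw [invCount, card_filter, Fintype.sum_prod_type]

lemma two_mul_invCount (w : Perm (Fin n)) :
    2 * invCount w = ∑ i, ∑ j, if (i < j ↔ w i < w j) then 0 else 1 := by
  rw [invCount_eq_sum, two_mul]
  nth_rw 2 [sum_comm]
  simp only [← sum_add_distrib]
  refine sum_congr rfl fun i _ => sum_congr rfl fun j _ => ?_
  have := w.injective.eq_iff (a := i) (b := j)
  split_ifs <;> grind

/- For positions `p, q` compare the three orders `p < q`, `u p < u q` and `v⁻¹ (u p) < v⁻¹ (u q)`.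
Disagreements of the first with the second, the first with the third, and the second with the
third number `2ℓ(u)`, `2ℓ(u⁻¹v)` and `2ℓ(v)`; the second and third disagree iff exactly one of
them disagrees with the first, so `2ℓ(u) + 2ℓ(u⁻¹v) = 2ℓ(v) + 2 · #{p, q : the first order
disagrees with both}`. -/
lemma wle_iff_forall_or (u v : Perm (Fin n)) :
    wle u v ↔ ∀ p q, (p < q ↔ u p < u q) ∨ (p < q ↔ v⁻¹ (u p) < v⁻¹ (u q)) := by
  set z := u⁻¹ * v
  have hz : 2 * invCount z = ∑ p, ∑ q, if (p < q ↔ v⁻¹ (u p) < v⁻¹ (u q)) then 0 else 1 := by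
    rw [two_mul_invCount, ← Equiv.sum_comp z⁻¹]
    refine sum_congr rfl fun p _ => ?_
    rw [← Equiv.sum_comp z⁻¹]
    simp [z, iff_comm]
  have hv : 2 * invCount v = ∑ p, ∑ q, if (u p < u q ↔ v⁻¹ (u p) < v⁻¹ (u q)) then 0 else 1 := by
    rw [two_mul_invCount, ← Equiv.sum_comp (v⁻¹ * u)]
    refine sum_congr rfl fun p _ => ?_
    rw [← Equiv.sum_comp (v⁻¹ * u)]
    simp [iff_comm]
  have key : 2 * invCount u + 2 * invCount z = 2 * invCount v +
      2 * ∑ p, ∑ q, if (p < q ↔ u p < u q) ∨ (p < q ↔ v⁻¹ (u p) < v⁻¹ (u q)) then 0 else 1 := by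
    rw [two_mul_invCount u, hz, hv, mul_sum]
    simp only [← sum_add_distrib, mul_sum]
    refine sum_congr rfl fun p _ => sum_congr rfl fun q _ => ?_
    split_ifs <;> grind
  have : wle u v ↔ ∑ p, ∑ q,
      (if (p < q ↔ u p < u q) ∨ (p < q ↔ v⁻¹ (u p) < v⁻¹ (u q)) then 0 else 1) = 0 := by
    change invCount u + invCount z = invCount v ↔ _
    omega
  simpa only [sum_eq_zero_iff, mem_univ, forall_const, ite_eq_left_iff, one_ne_zero, imp_false,
    not_not] using this

theorem wle_iff (u v : Perm (Fin n)) :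
    wle u v ↔ ∀ p q, p < q → u q < u p → v⁻¹ (u p) < v⁻¹ (u q) := by
  rw [wle_iff_forall_or]
  refine ⟨fun h p q hpq hu => ((h p q).resolve_left ?_).mp hpq, fun h p q => ?_⟩
  · simp [hpq, hu.not_gt]
  · have := u.injective.eq_iff (a := p) (b := q)
    have := h p q
    have := h q p
    grind

lemma invCount_le_of_wle {u v : Perm (Fin n)} (h : wle u v) : invCount u ≤ invCount v :=
  h ▸ Nat.le_add_right _ _

end WeakOrder

section SkewCut

variable {n m : ℕ}

def IsSkewAt (w : Perm (Fin n)) (m : ℕ) : Prop :=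
  ∀ i j : Fin n, (i : ℕ) < m → m ≤ (j : ℕ) → w j < w i

lemma card_le_of_forall_apply_lt {α : Type*} {f : α → Fin n} (hf : Function.Injective f)
    {s : Finset α} {x : Fin n} (h : ∀ j ∈ s, f j < x) : #s ≤ x := by
  simpa using card_le_card_of_injOn f (t := Iio x) (fun j hj => by simpa using h j hj)
    hf.injOn

lemma card_le_of_forall_lt_apply {α : Type*} {f : α → Fin n} (hf : Function.Injective f)
    {s : Finset α} {x : Fin n} (h : ∀ j ∈ s, x < f j) : #s ≤ n - 1 - x := by
  simpa using card_le_card_of_injOn f (t := Ioi x) (fun j hj => by simpa using h j hj)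
    hf.injOn

lemma IsSkewAt.val_lt_iff {w : Perm (Fin n)} (h : IsSkewAt w m) (hm : m ≤ n) (i : Fin n) :
    (i : ℕ) < m ↔ n - m ≤ w i := by
  constructor
  · intro hi
    have := card_le_of_forall_apply_lt w.injective (s := {j | m ≤ (j : ℕ)})
      fun j hj => h i j hi (by simpa using hj)
    have hc := card_filter_add_card_filter_not (s := (univ : Finset (Fin n))) (· < m)
    simp only [card_filter_val_lt, not_lt, card_univ, Fintype.card_fin] at hc
    omega
  · intro hwi
    by_contra hi
    have := card_le_of_forall_lt_apply w.injective (s := {j | (j : ℕ) < m})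
      fun j hj => h j i (by simpa using hj) (by omega)
    simp only [card_filter_val_lt, inf_le_iff] at this
    omega

lemma IsSkewAt.inv {w : Perm (Fin n)} (h : IsSkewAt w m) (hm : m ≤ n) :
    IsSkewAt w⁻¹ (n - m) := by
  intro x y hx hy
  have hy' := (h.val_lt_iff hm (w⁻¹ y)).2 (by simpa using hy)
  have hx' := (h.val_lt_iff hm (w⁻¹ x)).not.2 (by simp only [Perm.coe_inv, apply_symm_apply]; omega)
  rw [Fin.lt_def]; omega

lemma IsSkewAt.of_inv {w : Perm (Fin n)} (h : IsSkewAt w⁻¹ (n - m)) (hm : m ≤ n) :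
    IsSkewAt w m := by
  simpa [Nat.sub_sub_self hm] using h.inv (n.sub_le m)

lemma IsSkewAt.of_wle {u v : Perm (Fin n)} (h : IsSkewAt u m) (hm : m ≤ n) (huv : wle u v) :
    IsSkewAt v m := by
  refine .of_inv (fun x y hx hy => ?_) hm
  have hy' := (h.val_lt_iff hm (u⁻¹ y)).2 (by simpa using hy)
  have hx' := (h.val_lt_iff hm (u⁻¹ x)).not.2 (by simp only [Perm.coe_inv, apply_symm_apply]; omega)
  simpa using (wle_iff u v).1 huv (u⁻¹ y) (u⁻¹ x) (by rw [Fin.lt_def]; omega) (h _ _ hy' (by omega))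

end SkewCut

section SkewSum

variable {m k : ℕ}

/-- `skewSum a b = a ⊖ b`: the letters of `a` raised by `k`, followed by the letters of `b`. -/
def skewSum (a : Perm (Fin m)) (b : Perm (Fin k)) : Perm (Fin (m + k)) :=
  finSumFinEquiv.symm.trans <| (a.sumCongr b).trans <| (Equiv.sumComm _ _).trans <|
    finSumFinEquiv.trans (finCongr (Nat.add_comm k m))

@[simp] lemma castLE_lt_addNat (x : Fin m) (y : Fin k) :
    y.castLE (Nat.le_add_left k m) < x.addNat k := by
  rw [Fin.lt_def, val_castLE, val_addNat]; omega

@[simp] lemma castAdd_lt_castAdd_iff {i j : Fin m} : castAdd k i < castAdd k j ↔ i < j :=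
  (strictMono_castAdd k).lt_iff_lt

@[simp] lemma castAdd_lt_natAdd (i : Fin m) (j : Fin k) : castAdd k i < natAdd m j := by
  rw [Fin.lt_def, val_castAdd, val_natAdd]; omega

@[simp] lemma not_natAdd_lt_castAdd (i : Fin m) (j : Fin k) : ¬ natAdd m j < castAdd k i :=
  (castAdd_lt_natAdd i j).not_gt

variable (a : Perm (Fin m)) (b : Perm (Fin k))

@[simp] lemma skewSum_apply_castAdd (i : Fin m) : skewSum a b (castAdd k i) = (a i).addNat k := by
  ext; simp [skewSum]

@[simp] lemma skewSum_apply_natAdd (j : Fin k) :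
    skewSum a b (natAdd m j) = (b j).castLE (Nat.le_add_left k m) := by
  ext; simp [skewSum]

@[simp] lemma skewSum_inv_apply_addNat (x : Fin m) :
    (skewSum a b)⁻¹ (x.addNat k) = castAdd k (a⁻¹ x) := by
  rw [Perm.inv_eq_iff_eq]; simp

@[simp] lemma skewSum_inv_apply_castLE (y : Fin k) :
    (skewSum a b)⁻¹ (y.castLE (Nat.le_add_left k m)) = natAdd m (b⁻¹ y) := by
  rw [Perm.inv_eq_iff_eq]; simp

lemma skewSum_inj {a a' : Perm (Fin m)} {b b' : Perm (Fin k)} :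
    skewSum a b = skewSum a' b' ↔ a = a' ∧ b = b' := by
  refine ⟨fun h => ⟨?_, ?_⟩, fun h => h.1 ▸ h.2 ▸ rfl⟩
  · ext i; simpa using congr(($h (castAdd k i) : ℕ))
  · ext j; simpa using congr(($h (natAdd m j) : ℕ))

lemma invCount_skewSum : invCount (skewSum a b) = invCount a + invCount b + m * k := by
  simp only [invCount_eq_sum, Fin.sum_univ_add]
  simp [sum_add_distrib, add_comm, add_assoc]

lemma isSkewAt_skewSum : IsSkewAt (skewSum a b) m := by
  intro i j hi hj
  induction i using Fin.addCases with
  | right i => simp at hi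
  | left i =>
    induction j using Fin.addCases with
    | left j => rw [val_castAdd] at hj; omega
    | right j => simp

lemma IsSkewAt.exists_skewSum_eq {w : Perm (Fin (m + k))} (h : IsSkewAt w m) :
    ∃ a b, skewSum a b = w := by
  have hw (i : Fin (m + k)) : (i : ℕ) < m ↔ k ≤ w i := by
    simpa using h.val_lt_iff (m.le_add_right k) i
  let a : Perm (Fin m) := .ofBijective (fun i => (w (castAdd k i)).subNat k ((hw _).1 (by simp)))
    (Finite.injective_iff_bijective.1 fun i j hij => by simpa using congr(($hij).addNat k))
  let b : Perm (Fin k) :=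
    .ofBijective (fun j => (w (natAdd m j)).castLT (by have := (hw (natAdd m j)).not.1; simp_all))
      (Finite.injective_iff_bijective.1 fun i j hij =>
        natAdd_injective _ _ (w.injective (Fin.ext congr(($hij : ℕ)))))
  refine ⟨a, b, ?_⟩
  ext i
  induction i using Fin.addCases <;> simp [a, b]

lemma wle_skewSum_iff {a a' : Perm (Fin m)} {b b' : Perm (Fin k)} :
    wle (skewSum a b) (skewSum a' b') ↔ wle a a' ∧ wle b b' := by
  simp only [wle_iff]
  refine ⟨fun h => ⟨fun p q hpq hlt => ?_, fun p q hpq hlt => ?_⟩, fun ⟨ha, hb⟩ p q hpq hlt => ?_⟩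
  · simpa using h (castAdd k p) (castAdd k q) (by simpa) (by simpa)
  · simpa using h (natAdd m p) (natAdd m q) (by simpa) (by simpa)
  · induction p using Fin.addCases <;> induction q using Fin.addCases <;> simp_all

open scoped Classical in
lemma filter_wle_skewSum :
    univ.filter (wle (skewSum a b)) =
      (univ.filter (wle a) ×ˢ univ.filter (wle b)).image fun p => skewSum p.1 p.2 := by
  ext v
  simp only [mem_filter, mem_univ, true_and, mem_image, mem_product, Prod.exists]
  constructor
  · intro hv
    obtain ⟨a', b', rfl⟩ := ((isSkewAt_skewSum a b).of_wle (m.le_add_right k) hv).exists_skewSum_eq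
    exact ⟨a', b', wle_skewSum_iff.1 hv, rfl⟩
  · rintro ⟨a', b', hab, rfl⟩
    exact wle_skewSum_iff.2 hab

open scoped Classical in
theorem FV_skewSum : FV (skewSum a b) = FV a * FV b := by
  rw [FV, filter_wle_skewSum, sum_image fun p _ q _ h => Prod.ext_iff.2 (skewSum_inj.1 h),
    FV, FV, sum_mul_sum, sum_product]
  refine sum_congr rfl fun a' ha => sum_congr rfl fun b' hb => ?_
  rw [mem_filter] at ha hb
  have := invCount_le_of_wle ha.2
  have := invCount_le_of_wle hb.2
  rw [← pow_add, invCount_skewSum, invCount_skewSum]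
  dsimp only
  congr 1
  omega

end SkewSum

lemma FV_permCongr_finCongr {n n' : ℕ} (h : n = n') (w : Perm (Fin n)) :
    FV ((finCongr h).permCongr w) = FV w := by
  subst h; rfl

def Avoids3142 {n : ℕ} (π : Perm (Fin n)) : Prop :=
  ¬ ∃ i j k h : Fin n, i < j ∧ j < k ∧ k < h ∧ π j < π h ∧ π h < π i ∧ π i < π k

lemma exists_isSkewAt {n : ℕ} (hn : 0 < n) {π : Perm (Fin n)} (hπ : Avoids3142 π)
    (hfl : π ⟨n - 1, Nat.sub_one_lt_of_lt hn⟩ < π ⟨0, hn⟩) : ∃ m, 1 ≤ m ∧ m < n ∧ IsSkewAt π m := by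
  set first : Fin n := ⟨0, hn⟩
  obtain ⟨J, hJ, hJmax⟩ :=
    exists_max_image (univ.filter fun j => π first ≤ π j) id ⟨first, by simp⟩
  simp only [mem_filter, mem_univ, true_and, id] at hJ hJmax
  have hJlast : (J : ℕ) < n - 1 := by
    by_contra!
    have : J = ⟨n - 1, Nat.sub_one_lt_of_lt hn⟩ :=
      Fin.ext (show (J : ℕ) = n - 1 by have := J.2; omega)
    exact (hfl.trans_le (this ▸ hJ)).false
  refine ⟨J + 1, by omega, by omega, fun i j hi hj => ?_⟩
  have hJj : J < j := by rw [Fin.lt_def]; omega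
  have hπj : π j < π first := by
    by_contra! hj'
    exact (hJmax j hj').not_gt hJj
  by_contra! hij
  have hfirst : first < i := by
    refine Fin.lt_def.2 (Nat.pos_of_ne_zero fun h => ?_)
    obtain rfl : i = first := Fin.ext h
    exact (hij.trans_lt hπj).false
  have hiJ : i < J := by
    refine lt_of_le_of_ne (Fin.le_def.2 (by omega)) ?_
    rintro rfl
    exact (hij.trans_lt (hπj.trans_le hJ)).false
  exact hπ ⟨first, i, J, j, hfirst, hiJ, hJj, hij.lt_of_ne (π.injective.ne (hiJ.trans hJj).ne), hπj,
    hJ.lt_of_ne (π.injective.ne (hfirst.trans hiJ).ne)⟩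

/-- If `π ∈ S_n` is separable with `a_1 > a_n`, then `π` is the
concatenation of a block `π_A` on the letters `{n-m+1,…,n}` and a block `π_B` on the
letters `{1,…,n-m}` (0-indexed below; `σA`, `σB` are the renormalized blocks), and
`F(V_π, q) = F(V_{σ_A}, q) · F(V_{σ_B}, q)`. -/
theorem FV_eq_mul_of_first_gt_last (n : ℕ) (hn : 0 < n) (π : Equiv.Perm (Fin n))
    (hsep : IsSeparable π) (hfl : π ⟨n - 1, by omega⟩ < π ⟨0, hn⟩) :
    ∃ m : ℕ, ∃ _h1 : 1 ≤ m, ∃ hmn : m < n,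
      (∀ i : Fin n, (i : ℕ) < m ↔ n - m ≤ (π i : ℕ)) ∧
      ∃ σA : Equiv.Perm (Fin m), ∃ σB : Equiv.Perm (Fin (n - m)),
        (∀ i : Fin m, (σA i : ℕ) + (n - m) = (π ⟨i, i.2.trans hmn⟩ : ℕ)) ∧
        (∀ i : Fin (n - m),
          (σB i : ℕ) = (π ⟨m + i, by have := i.2; omega⟩ : ℕ)) ∧
        FV π = FV σA * FV σB := by
  obtain ⟨m, hm1, hmn, hcut⟩ := exists_isSkewAt hn hsep.1 hfl
  have hsplit : n = m + (n - m) := by omega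
  obtain ⟨σA, σB, hσ⟩ : ∃ a b, skewSum a b = (finCongr hsplit).permCongr π :=
    IsSkewAt.exists_skewSum_eq fun i j hi hj => by simpa using hcut _ _ hi hj
  refine ⟨m, hm1, hmn, hcut.val_lt_iff hmn.le, σA, σB, fun i => ?_, fun j => ?_, ?_⟩
  · have := congr(($hσ (castAdd _ i) : ℕ))
    simp only [skewSum_apply_castAdd, val_addNat, permCongr_apply, finCongr_symm, finCongr_apply,
      val_cast] at this
    exact this
  · have := congr(($hσ (natAdd m j) : ℕ))
    simp only [skewSum_apply_natAdd, val_castLE, permCongr_apply, finCongr_symm, finCongr_apply,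
      val_cast] at this
    exact this
  · rw [← FV_permCongr_finCongr hsplit, ← hσ, FV_skewSum]

end SepPerm
end
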